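/- For every real number x with 1 < x < 2 there exists a natural number N such that for all n > N and every a ∈ T_n of rank 1, the minimum transformation degree of the variant T_n^a is at most x·n. Moreover, for every integer k ≥ 2 and every integer n ≥ ⌈k·ln k⌉ + 1, and every a ∈ T_n of rank 1, the minimum transformation degree of T_n^a is at least n + k. (In particular, μ(n)/n → 1 and μ(n) − n → ∞ as n → ∞, where μ(n) denotes the degree of T_n^a with rank(a) = 1.) -/

import Mathlib

/-- Multiplication of the full transformation semigroup: `(f * g) x = g (f x)`. -/
def tMul {n : ℕ} (f g : Fin n → Fin n) : Fin n → Fin n := fun x => g (f x)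

/-- The rank of a transformation: the cardinality of its image. -/
def trank {n : ℕ} (f : Fin n → Fin n) : ℕ := (Finset.univ.image f).card

/-- The minimum transformation degree of the variant `T_n^a` (operation
`f ⋆ g = fun x => g (a (f x))`): the least `m ≥ 1` such that there is an injective
semigroup homomorphism from `T_n^a` into `T_m`. -/
noncomputable def variantDegree (n : ℕ) (a : Fin n → Fin n) : ℕ :=
  sInf {m | 1 ≤ m ∧ ∃ φ : (Fin n → Fin n) → (Fin m → Fin m), Function.Injective φ ∧
      ∀ f g : Fin n → Fin n, φ (fun x => g (a (f x))) = tMul (φ f) (φ g)}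

/-!
Write `c` for the value of the rank-one map `a`, so that `f ⋆ g` is the constant map with value
`g c`.

Upper bound: fix an injection `ι` of `Fin n` into `U × V` and a code `enc g : Fin k → U` which,
together with `g c`, determines `g`, and which is constant with value `(ι j).1` on the constant map
with value `j`; this only needs `n ≤ |U| |V|` and `n ^ (n - 1) ≤ |U| ^ k`. Letting `g` act on
`U ⊕ V ⊕ Fin k` by sending `U` and `V` to the two coordinates of `ι (g c)` and `i` to `enc g i`
gives a faithful representation of `T_n^a`. With `|V| = s` fixed and `|U| = n / s + 1` its degree
is `n + O(n / s) + s`.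

Lower bound: let `φ` embed `T_n^a` into `T_m` and let `W` be the union of the images of the `φ g`.
Since `φ g (φ f z) = φ (fun _ => g c) z`, the restriction of `φ g` to `W` depends only on `g c`, so
`g` is determined by `g c` and the values of `φ g` off `W`, whence `n ^ n ≤ n * w ^ (m - w)` with
`w = |W|`. An elementary estimate of `(m - w) log w` rules this out when `m < n + k` and
`n > k log k`.
-/

open Function

def variantEmbeddingSizes (n : ℕ) (a : Fin n → Fin n) : Set ℕ :=
  {m | 1 ≤ m ∧ ∃ φ : (Fin n → Fin n) → (Fin m → Fin m), Injective φ ∧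
      ∀ f g : Fin n → Fin n, φ (fun x => g (a (f x))) = tMul (φ f) (φ g)}

theorem card_mem_variantEmbeddingSizes {n : ℕ} {a : Fin n → Fin n} {α : Type*} [Fintype α]
    [Nonempty α] {φ : (Fin n → Fin n) → α → α} (hφ : Injective φ)
    (hmul : ∀ f g, φ (fun x => g (a (f x))) = φ g ∘ φ f) :
    Fintype.card α ∈ variantEmbeddingSizes n a := by
  let e := Fintype.equivFin α
  refine ⟨Fintype.card_pos, fun g => e ∘ φ g ∘ e.symm, fun g g' h => hφ ?_, fun f g => ?_⟩
  · funext x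
    simpa using congrFun h (e x)
  · funext y
    simp [tMul, hmul]

theorem exists_eq_const_of_trank_eq_one {n : ℕ} {a : Fin n → Fin n} (ha : trank a = 1) :
    ∃ c, a = fun _ => c := by
  obtain ⟨c, hc⟩ := Finset.card_eq_one.mp ha
  refine ⟨c, funext fun x => Finset.mem_singleton.mp ?_⟩
  exact hc ▸ Finset.mem_image_of_mem a (Finset.mem_univ x)

section BlockMap

variable {U V C : Type*}

def blockMap (p : U × V) (e : C → U) : (U ⊕ V) ⊕ C → (U ⊕ V) ⊕ C :=
  Sum.elim (Sum.elim (fun _ => .inl (.inl p.1)) (fun _ => .inl (.inr p.2)))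
    (fun z => .inl (.inl (e z)))

theorem blockMap_comp (p p' : U × V) (e e' : C → U) :
    blockMap p e ∘ blockMap p' e' = blockMap p (fun _ => p.1) := by
  funext z
  rcases z with (_ | _) | _ <;> rfl

theorem blockMap_inj [Nonempty U] [Nonempty V] {p p' : U × V} {e e' : C → U} :
    blockMap p e = blockMap p' e' ↔ p = p' ∧ e = e' := by
  refine ⟨fun h => ⟨Prod.ext ?_ ?_, funext fun z => ?_⟩, fun ⟨hp, he⟩ => hp ▸ he ▸ rfl⟩
  · simpa [blockMap] using congrFun h (.inl (.inl (Classical.arbitrary U)))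
  · simpa [blockMap] using congrFun h (.inl (.inr (Classical.arbitrary V)))
  · simpa [blockMap] using congrFun h (.inr z)

end BlockMap

theorem exists_injective_on_eval_fibers {X Y Z : Type*} [Fintype X] [Fintype Y] [Fintype Z]
    (c : X) (hcard : Fintype.card Y ^ (Fintype.card X - 1) ≤ Fintype.card Z) (v : Y → Z) :
    ∃ enc : (X → Y) → Z, (∀ g g', g c = g' c → enc g = enc g' → g = g') ∧
      ∀ y, enc (fun _ => y) = v y := by
  classical
  obtain ⟨ψ⟩ : Nonempty (({x // x ≠ c} → Y) ↪ Z) :=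
    Embedding.nonempty_of_card_le (by simpa [Fintype.card_subtype_compl] using hcard)
  let rest : (X → Y) → {x // x ≠ c} → Y := fun g x => g x
  -- on the fibre over `g c`, exchange the code of the constant map with its prescribed value
  refine ⟨fun g => Equiv.swap (ψ (rest fun _ => g c)) (v (g c)) (ψ (rest g)),
    fun g g' hc he => ?_, fun y => Equiv.swap_apply_left _ _⟩
  dsimp only at he
  rw [hc] at he
  have hrest : rest g = rest g' := ψ.injective ((Equiv.swap _ _).injective he)
  exact (Equiv.funSplitAt c Y).injective (Prod.ext hc hrest)

theorem add_add_mem_variantEmbeddingSizes {n u s k : ℕ} (c : Fin n) (hus : n ≤ u * s)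
    (hpow : n ^ (n - 1) ≤ u ^ k) : u + s + k ∈ variantEmbeddingSizes n (fun _ => c) := by
  have hn := c.pos
  have : NeZero u := ⟨by rintro rfl; omega⟩
  have : NeZero s := ⟨by rintro rfl; omega⟩
  obtain ⟨ι⟩ : Nonempty (Fin n ↪ Fin u × Fin s) :=
    Embedding.nonempty_of_card_le (by simpa using hus)
  obtain ⟨enc, henc, henc_const⟩ :=
    exists_injective_on_eval_fibers (Z := Fin k → Fin u) c (by simpa using hpow)
      (fun j _ => (ι j).1)
  have hmem := card_mem_variantEmbeddingSizes (a := fun _ => c)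
    (φ := fun g => blockMap (ι (g c)) (enc g))
    (fun g g' h => have ⟨hp, he⟩ := blockMap_inj.1 h; henc g g' (ι.injective hp) he)
    (fun f g => by simp only [blockMap_comp, henc_const])
  simpa [add_assoc] using hmem

theorem variantDegree_const_le {n u s k : ℕ} (c : Fin n) (hus : n ≤ u * s)
    (hpow : n ^ (n - 1) ≤ u ^ k) : variantDegree n (fun _ => c) ≤ u + s + k :=
  Nat.sInf_le (add_add_mem_variantEmbeddingSizes c hus hpow)

theorem pow_pred_le_pow_of_le_mul {n u s : ℕ} (hs : 0 < s) (hus : n ≤ u * s) (hsu : s ^ s ≤ u) :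
    n ^ (n - 1) ≤ u ^ (n - 1 + ((n - 1) / s + 1)) := by
  have hs_pow : s ^ (n - 1) ≤ u ^ ((n - 1) / s + 1) :=
    calc s ^ (n - 1) ≤ s ^ (s * ((n - 1) / s + 1)) :=
          Nat.pow_le_pow_right hs (Nat.lt_mul_div_succ _ hs).le
      _ = (s ^ s) ^ ((n - 1) / s + 1) := pow_mul _ _ _
      _ ≤ u ^ ((n - 1) / s + 1) := Nat.pow_le_pow_left hsu _
  calc n ^ (n - 1) ≤ (u * s) ^ (n - 1) := Nat.pow_le_pow_left hus _
    _ = u ^ (n - 1) * s ^ (n - 1) := mul_pow _ _ _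
    _ ≤ u ^ (n - 1) * u ^ ((n - 1) / s + 1) := Nat.mul_le_mul_left _ hs_pow
    _ = u ^ (n - 1 + ((n - 1) / s + 1)) := (pow_add _ _ _).symm

theorem variantDegree_const_le_of_pow_le {n s : ℕ} (c : Fin n) (hs : 0 < s)
    (hn : s ^ (s + 1) ≤ n) : variantDegree n (fun _ => c) ≤ n + 2 * (n / s) + s + 1 := by
  have hus : n ≤ (n / s + 1) * s := (Nat.lt_mul_div_succ n hs).le.trans_eq (mul_comm _ _)
  have hsu : s ^ s ≤ n / s + 1 :=
    ((Nat.le_div_iff_mul_le hs).2 (by rwa [← pow_succ])).trans (Nat.le_succ _)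
  have hdiv : (n - 1) / s ≤ n / s := Nat.div_le_div_right (Nat.sub_le n 1)
  have := variantDegree_const_le c hus (pow_pred_le_pow_of_le_mul hs hus hsu)
  have := c.pos
  omega

theorem exists_variantDegree_const_le_mul {x : ℝ} (hx : 1 < x) :
    ∃ N : ℕ, ∀ n, N < n → ∀ c : Fin n, (variantDegree n (fun _ => c) : ℝ) ≤ x * n := by
  set s := ⌈4 / (x - 1)⌉₊
  have hx1 : 0 < x - 1 := sub_pos.2 hx
  have hs : 4 / (x - 1) ≤ s := Nat.le_ceil _
  have hs0 : 0 < s := Nat.cast_pos.1 ((div_pos four_pos hx1).trans_le hs)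
  refine ⟨s ^ (s + 1) + ⌈2 * (s + 1) / (x - 1)⌉₊, fun n hn c => ?_⟩
  have hdeg := variantDegree_const_le_of_pow_le c hs0 (by omega)
  have hn_large : 2 * (s + 1) / (x - 1) < n := Nat.lt_of_ceil_lt (by omega)
  have hdiv : ((n / s : ℕ) : ℝ) ≤ n / s := Nat.cast_div_le
  have h4s : 4 / (s : ℝ) ≤ x - 1 := by
    rw [div_le_iff₀ (by positivity)]
    rw [div_le_iff₀ hx1] at hs
    linarith
  have h1 : 2 * ((n : ℝ) / s) ≤ (x - 1) * n / 2 :=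
    calc 2 * ((n : ℝ) / s) = 4 / s * n / 2 := by ring
      _ ≤ (x - 1) * n / 2 := by gcongr
  have h2 : (s : ℝ) + 1 ≤ (x - 1) * n / 2 := by
    rw [div_lt_iff₀ hx1] at hn_large
    linarith
  calc (variantDegree n (fun _ => c) : ℝ) ≤ n + 2 * (n / s : ℕ) + s + 1 := by exact_mod_cast hdeg
    _ ≤ x * n := by linarith

theorem exists_pow_pred_le_of_embedding {n : ℕ} {α : Type*} [Fintype α] (c : Fin n)
    {φ : (Fin n → Fin n) → α → α} (hφ : Injective φ)
    (hmul : ∀ f g, φ (fun _ => g c) = φ g ∘ φ f) :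
    ∃ w ≤ Fintype.card α, n ^ (n - 1) ≤ w ^ (Fintype.card α - w) := by
  classical
  set W : Finset α := Finset.univ.filter fun y => ∃ f z, φ f z = y
  have hW : ∀ f z, φ f z ∈ W := fun f z => Finset.mem_filter.2 ⟨Finset.mem_univ _, f, z, rfl⟩
  let code : (Fin n → Fin n) → Fin n × (↥Wᶜ → ↥W) := fun g => (g c, fun y => ⟨φ g y, hW _ _⟩)
  have hcode : Injective code := by
    intro g g' h
    simp only [code, Prod.mk.injEq, funext_iff, Subtype.ext_iff] at h
    obtain ⟨hc, hout⟩ := h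
    refine hφ (funext fun y => ?_)
    by_cases hy : y ∈ W
    · obtain ⟨f, z, rfl⟩ := (Finset.mem_filter.1 hy).2
      rw [← comp_apply (f := φ g), ← hmul, ← comp_apply (f := φ g'), ← hmul, hc]
    · exact hout ⟨y, Finset.mem_compl.2 hy⟩
  have hcard := Fintype.card_le_of_injective code hcode
  simp only [Fintype.card_prod, Fintype.card_fun, Fintype.card_fin, Fintype.card_coe,
    Finset.card_compl] at hcard
  refine ⟨W.card, W.card_le_univ, Nat.le_of_mul_le_mul_left ?_ c.pos⟩
  rwa [mul_pow_sub_one c.pos.ne']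

section Estimates

open Real

theorem two_mul_sub_three_lt_mul_log {x : ℝ} (hx : 0 < x) : 2 * x - 3 < x * log x := by
  have h := log_le_sub_one_of_pos (div_pos (exp_pos 1) hx)
  rw [log_div (exp_pos 1).ne' hx.ne', log_exp, le_sub_iff_add_le, le_div_iff₀ hx] at h
  linarith [exp_one_lt_d9]

theorem sub_mul_log_lt_mul_log_div {k n w : ℝ} (hw : 0 < w) (hwk : w ≤ k) (hkn : k < n)
    (hn : 1 < n) (hklog : k * log k ≤ n - 1) : (k - w) * log w < (n - 1) * log (n / w) := by
  have hk : 0 < k := hw.trans_le hwk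
  calc (k - w) * log w ≤ (k - w) * log k :=
        mul_le_mul_of_nonneg_left (log_le_log hw hwk) (sub_nonneg.2 hwk)
    _ = k * log k * (1 - w / k) := by field_simp
    _ ≤ (n - 1) * (1 - w / k) :=
        mul_le_mul_of_nonneg_right hklog (sub_nonneg.2 ((div_le_one hk).2 hwk))
    _ ≤ (n - 1) * log (k / w) := by
        refine mul_le_mul_of_nonneg_left ?_ (by linarith)
        simpa [inv_div] using one_sub_inv_le_log_of_pos (div_pos hk hw)
    _ < (n - 1) * log (n / w) :=
        mul_lt_mul_of_pos_left (log_lt_log (div_pos hk hw) (div_lt_div_of_pos_right hkn hw))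
          (by linarith)

theorem sub_mul_log_lt_pred_mul_log {k n m w : ℝ} (hk : 1 < k) (hklog : k * log k ≤ n - 1)
    (h2k : 2 * k ≤ n + 1) (hw : 1 ≤ w) (hwm : w ≤ m) (hm : m + 1 ≤ n + k) :
    (m - w) * log w < (n - 1) * log n := by
  have hn : 1 < n := by linarith
  have hlogw : 0 ≤ log w := log_nonneg hw
  rcases lt_or_ge w k with hwk | hkw
  · have := sub_mul_log_lt_mul_log_div (by linarith) hwk.le (by linarith) hn hklog
    calc (m - w) * log w ≤ (n - 1 + (k - w)) * log w :=
          mul_le_mul_of_nonneg_right (by linarith) hlogw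
      _ = (n - 1) * log w + (k - w) * log w := by ring
      _ < (n - 1) * log w + (n - 1) * log (n / w) := by linarith
      _ = (n - 1) * log n := by rw [log_div (by positivity) (by positivity)]; ring
  rcases lt_or_ge w n with hwn | hnw
  · calc (m - w) * log w ≤ (n - 1) * log w := mul_le_mul_of_nonneg_right (by linarith) hlogw
      _ < (n - 1) * log n := mul_lt_mul_of_pos_left (log_lt_log (by linarith) hwn) (by linarith)
  · have hw_sq : w < n ^ 2 := by nlinarith
    have hlogw_lt : log w < 2 * log n :=
      calc log w < log (n ^ 2) := log_lt_log (by linarith) hw_sq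
        _ = 2 * log n := by rw [log_pow]; norm_num
    have hlogn : 0 < log n := log_pos hn
    calc (m - w) * log w ≤ (k - 1) * log w := mul_le_mul_of_nonneg_right (by linarith) hlogw
      _ < (k - 1) * (2 * log n) := mul_lt_mul_of_pos_left hlogw_lt (by linarith)
      _ ≤ (n - 1) * log n := by nlinarith

theorem pow_sub_lt_pow_pred {k n m w : ℕ} (hk : 2 ≤ k) (hn : ⌈(k : ℝ) * log k⌉₊ + 1 ≤ n)
    (hwm : w ≤ m) (hm : m < n + k) : w ^ (m - w) < n ^ (n - 1) := by
  have hklog : (k : ℝ) * log k ≤ n - 1 := by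
    have : (⌈(k : ℝ) * log k⌉₊ : ℝ) + 1 ≤ n := by exact_mod_cast hn
    linarith [Nat.le_ceil ((k : ℝ) * log k)]
  have h2k : 2 * k ≤ n + 1 := by
    have := two_mul_sub_three_lt_mul_log (x := k) (by positivity)
    have : (2 * k : ℝ) < n + 2 := by linarith
    exact Nat.lt_succ_iff.1 (by exact_mod_cast this)
  have hn1 : 1 < n := by omega
  rcases Nat.eq_zero_or_pos w with rfl | hw
  · exact (pow_le_one₀ le_rfl zero_le_one).trans_lt (Nat.one_lt_pow (by omega) hn1)
  have key := sub_mul_log_lt_pred_mul_log (k := k) (n := n) (m := m) (w := w)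
    (by exact_mod_cast hk) hklog (by exact_mod_cast h2k) (by exact_mod_cast hw)
    (by exact_mod_cast hwm) (by exact_mod_cast hm)
  have : (w : ℝ) ^ (m - w) < (n : ℝ) ^ (n - 1) := by
    rwa [← log_lt_log_iff (by positivity) (by positivity), log_pow, log_pow, Nat.cast_sub hwm,
      Nat.cast_sub hn1.le, Nat.cast_one]
  exact_mod_cast this

end Estimates

theorem add_le_variantDegree_const {k n : ℕ} (hk : 2 ≤ k)
    (hn : ⌈(k : ℝ) * Real.log k⌉₊ + 1 ≤ n) (c : Fin n) :
    n + k ≤ variantDegree n (fun _ => c) := by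
  refine le_csInf ⟨_, add_add_mem_variantEmbeddingSizes (s := 1) c (Nat.mul_one n).ge le_rfl⟩ ?_
  rintro m ⟨-, φ, hφ, hmul⟩
  by_contra! hlt
  obtain ⟨w, hw, hpow⟩ := exists_pow_pred_le_of_embedding c hφ hmul
  rw [Fintype.card_fin] at hw hpow
  exact (pow_sub_lt_pow_pred hk hn hw hlt).not_ge hpow

/-- Asymptotics of the degree `μ(n)` of rank-`1` variants of `T_n`.
First: for every real `1 < x < 2` there is `N` such that `μ(n) ≤ x·n` for all `n > N`
(so `μ(n)/n → 1`).  Second: for every integer `k ≥ 2` and every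
`n ≥ ⌈k·ln k⌉ + 1`, we have `μ(n) ≥ n + k` (so `μ(n) - n → ∞`). -/
theorem variant_degree_asymptotics :
    (∀ x : ℝ, 1 < x → x < 2 → ∃ N : ℕ, ∀ n : ℕ, N < n →
      ∀ a : Fin n → Fin n, trank a = 1 → (variantDegree n a : ℝ) ≤ x * n) ∧
    (∀ k : ℕ, 2 ≤ k → ∀ n : ℕ, ⌈(k : ℝ) * Real.log k⌉₊ + 1 ≤ n →
      ∀ a : Fin n → Fin n, trank a = 1 → n + k ≤ variantDegree n a) := by
  refine ⟨fun x hx _ => ?_, fun k hk n hn a ha => ?_⟩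
  · obtain ⟨N, hN⟩ := exists_variantDegree_const_le_mul hx
    refine ⟨N, fun n hn a ha => ?_⟩
    obtain ⟨c, rfl⟩ := exists_eq_const_of_trank_eq_one ha
    exact hN n hn c
  · obtain ⟨c, rfl⟩ := exists_eq_const_of_trank_eq_one ha
    exact add_le_variantDegree_const hk hn c
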